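/- Let p be a prime with p ≡ 1 (mod 3), and let A₁, A₂, A₃ ∈ ℚ_p be nonzero with v_p(A₁) ≡ v_p(A₂) ≡ v_p(A₃) (mod 3) and with A₂/A₃ not a cube in ℚ_p. Let a ∈ ℚ_p satisfy a² = A₁. Then for all w, x₁, x₂, x₃ ∈ ℚ_p satisfying w² = A₁x₁⁶ + A₂x₂⁶ + A₃x₃⁶ and w² ≠ A₁x₁⁶, one has v_p(w − a·x₁³) ≡ v_p(w + a·x₁³) (mod 3). -/

import Mathlib

/-!
Put `u = w - a x₁³` and `v = w + a x₁³`, so that `u v = A₂ (x₂²)³ + A₃ (x₃²)³`. If the two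
summands cancelled, `-A₂ x₂⁶ / (A₃ x₃⁶)` would be a principal unit, hence a cube by Hensel's lemma
(`p ≠ 3`), and `A₂ / A₃` would be a cube; so `v(u) + v(v) ≡ v(A₂) ≡ v(A₁) = 2 v(a) (mod 3)`.
If `v(u) ≠ v(v)`, then `min (v(u), v(v)) = v(v - u) = v(2 a x₁³) ≡ v(a)` because `p ≠ 2`, and the
congruence for the sum forces the larger valuation to be `≡ v(a)` as well.
-/

namespace PadicInt

variable {p : ℕ} [hp : Fact p.Prime]

theorem exists_pow_eq_of_norm_sub_one_lt {n : ℕ} (hn : ¬ p ∣ n) {z : ℤ_[p]}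
    (hz : ‖z - 1‖ < 1) : ∃ r : ℤ_[p], r ^ n = z := by
  set F : Polynomial ℤ_[p] := Polynomial.X ^ n - Polynomial.C z
  have hn1 : ‖(n : ℤ_[p])‖ = 1 := norm_natCast_eq_one_iff.2 (hp.out.coprime_iff_not_dvd.2 hn)
  have hF : ‖F.aeval (1 : ℤ_[p])‖ < ‖F.derivative.aeval (1 : ℤ_[p])‖ ^ 2 := by
    simpa [F, norm_sub_rev, Polynomial.derivative_X_pow, hn1] using hz
  obtain ⟨r, hr, -⟩ := hensels_lemma hF
  exact ⟨r, by simpa [F, sub_eq_zero] using hr⟩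

end PadicInt

namespace Padic

variable {p : ℕ} [hp : Fact p.Prime]

theorem exists_pow_eq_of_norm_sub_one_lt {n : ℕ} (hn : ¬ p ∣ n) {t : ℚ_[p]}
    (ht : ‖t - 1‖ < 1) : ∃ y : ℚ_[p], y ^ n = t := by
  have ht1 : ‖t‖ ≤ 1 := by
    simpa using (nonarchimedean (t - 1) 1).trans (max_le ht.le norm_one.le)
  obtain ⟨r, hr⟩ := PadicInt.exists_pow_eq_of_norm_sub_one_lt (z := ⟨t, ht1⟩) hn ht
  exact ⟨r, by simpa using congrArg ((↑) : ℤ_[p] → ℚ_[p]) hr⟩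


variable {x y : ℚ_[p]}

theorem norm_le_norm_iff_valuation_le (hx : x ≠ 0) (hy : y ≠ 0) :
    ‖x‖ ≤ ‖y‖ ↔ y.valuation ≤ x.valuation := by
  rw [norm_eq_zpow_neg_valuation hx, norm_eq_zpow_neg_valuation hy,
    zpow_le_zpow_iff_right₀ (mod_cast hp.out.one_lt), neg_le_neg_iff]

theorem norm_eq_norm_iff_valuation_eq (hx : x ≠ 0) (hy : y ≠ 0) :
    ‖x‖ = ‖y‖ ↔ x.valuation = y.valuation := by
  rw [le_antisymm_iff, norm_le_norm_iff_valuation_le hx hy, norm_le_norm_iff_valuation_le hy hx,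
    le_antisymm_iff, and_comm]

theorem valuation_neg (x : ℚ_[p]) : (-x).valuation = x.valuation := by
  obtain rfl | hx := eq_or_ne x 0
  · simp
  · exact (norm_eq_norm_iff_valuation_eq (neg_ne_zero.2 hx) hx).1 (norm_neg x)

theorem valuation_add_of_norm_add_eq_max (hx : x ≠ 0) (hy : y ≠ 0)
    (h : ‖x + y‖ = max ‖x‖ ‖y‖) : (x + y).valuation = min x.valuation y.valuation := by
  have hxy : x + y ≠ 0 := by
    rw [← norm_pos_iff, h]
    exact lt_max_of_lt_left (norm_pos_iff.2 hx)
  refine le_antisymm (le_min ?_ ?_) (le_valuation_add hxy)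
  · exact (norm_le_norm_iff_valuation_le hx hxy).1 (h ▸ le_max_left _ _)
  · exact (norm_le_norm_iff_valuation_le hy hxy).1 (h ▸ le_max_right _ _)

theorem valuation_add_of_valuation_ne (hx : x ≠ 0) (hy : y ≠ 0)
    (h : x.valuation ≠ y.valuation) : (x + y).valuation = min x.valuation y.valuation :=
  valuation_add_of_norm_add_eq_max hx hy
    (add_eq_max_of_ne (mt (norm_eq_norm_iff_valuation_eq hx hy).1 h))

theorem norm_add_eq_max_of_not_pow {n : ℕ} (hn : ¬ p ∣ n) (hy : y ≠ 0)
    (h : ¬ ∃ c : ℚ_[p], c ^ n = -(x / y)) : ‖x + y‖ = max ‖x‖ ‖y‖ := by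
  by_contra hlt
  have hlt : ‖x + y‖ < max ‖x‖ ‖y‖ := (nonarchimedean x y).lt_of_ne hlt
  have hxy : ‖x‖ = ‖y‖ := by
    by_contra hne
    exact hlt.ne (add_eq_max_of_ne hne)
  rw [hxy, max_self] at hlt
  refine h (exists_pow_eq_of_norm_sub_one_lt hn ?_)
  rwa [show -(x / y) - 1 = -((x + y) / y) by field_simp; ring, norm_neg, norm_div,
    div_lt_one (norm_pos_iff.2 hy)]

theorem valuation_mul_pow_add_mul_pow_emod {n : ℕ} (hn : ¬ p ∣ n) {A B : ℚ_[p]}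
    (hA : A ≠ 0) (hB : B ≠ 0) (hAB : A.valuation % n = B.valuation % n)
    (hnp : ¬ ∃ c : ℚ_[p], c ^ n = -(A / B)) (hs : A * x ^ n + B * y ^ n ≠ 0) :
    (A * x ^ n + B * y ^ n).valuation % n = A.valuation % n := by
  have hn0 : n ≠ 0 := by rintro rfl; exact hn (dvd_zero p)
  obtain rfl | hx := eq_or_ne x 0
  · have hy : y ≠ 0 := by rintro rfl; simp [zero_pow hn0] at hs
    simp [zero_pow hn0, valuation_mul hB (pow_ne_zero n hy), Int.add_mul_emod_self_left, hAB]
  obtain rfl | hy := eq_or_ne y 0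
  · simp [zero_pow hn0, valuation_mul hA (pow_ne_zero n hx), Int.add_mul_emod_self_left]
  have hAx := mul_ne_zero hA (pow_ne_zero n hx)
  have hBy := mul_ne_zero hB (pow_ne_zero n hy)
  have hnp' : ¬ ∃ c : ℚ_[p], c ^ n = -(A * x ^ n / (B * y ^ n)) := by
    rintro ⟨c, hc⟩
    refine hnp ⟨c * y / x, ?_⟩
    rw [div_pow, mul_pow, hc]
    field_simp
  rw [valuation_add_of_norm_add_eq_max hAx hBy (norm_add_eq_max_of_not_pow hn hBy hnp'),
    valuation_mul hA (pow_ne_zero n hx), valuation_mul hB (pow_ne_zero n hy),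
    valuation_pow, valuation_pow]
  obtain h | h := min_choice (A.valuation + n * x.valuation) (B.valuation + n * y.valuation) <;>
    simp [h, Int.add_mul_emod_self_left, hAB]

end Padic

open Padic

theorem stmt_15_general (p : ℕ) [Fact p.Prime] (hp3 : p % 3 = 1)
    (A₁ A₂ A₃ : ℚ_[p]) (h2 : A₂ ≠ 0) (h3 : A₃ ≠ 0)
    (hv12 : A₁.valuation % 3 = A₂.valuation % 3)
    (hv23 : A₂.valuation % 3 = A₃.valuation % 3)
    (hnc : ¬ ∃ y : ℚ_[p], y ^ 3 = A₂ / A₃)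
    (a : ℚ_[p]) (ha : a ^ 2 = A₁)
    (w x₁ x₂ x₃ : ℚ_[p])
    (heq : w ^ 2 = A₁ * x₁ ^ 6 + A₂ * x₂ ^ 6 + A₃ * x₃ ^ 6)
    (hne : w ^ 2 ≠ A₁ * x₁ ^ 6) :
    (w - a * x₁ ^ 3).valuation % 3 = (w + a * x₁ ^ 3).valuation % 3 := by
  have hp_two_le := (Fact.out : p.Prime).two_le
  have hp2 : ¬ p ∣ 2 := fun h ↦ by have := Nat.le_of_dvd two_pos h; omega
  have hp3' : ¬ p ∣ 3 := fun h ↦ by have := Nat.le_of_dvd three_pos h; omega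
  set u := w - a * x₁ ^ 3
  set v := w + a * x₁ ^ 3
  have huv : u * v = A₂ * (x₂ ^ 2) ^ 3 + A₃ * (x₃ ^ 2) ^ 3 := by
    linear_combination heq - x₁ ^ 6 * ha
  have huv0 : u * v ≠ 0 := by
    rw [show u * v = w ^ 2 - A₁ * x₁ ^ 6 by linear_combination -x₁ ^ 6 * ha]
    exact sub_ne_zero.2 hne
  have hnc' : ¬ ∃ c : ℚ_[p], c ^ 3 = -(A₂ / A₃) := fun ⟨c, hc⟩ ↦
    hnc ⟨-c, by rw [Odd.neg_pow (by decide), hc, neg_neg]⟩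
  have hsum := valuation_mul_pow_add_mul_pow_emod hp3' h2 h3 hv23 hnc' (huv ▸ huv0)
  rw [← huv, valuation_mul (left_ne_zero_of_mul huv0) (right_ne_zero_of_mul huv0)] at hsum
  obtain h | h := eq_or_ne u.valuation v.valuation
  · rw [h]
  have hmin := valuation_add_of_valuation_ne (right_ne_zero_of_mul huv0)
    (neg_ne_zero.2 (left_ne_zero_of_mul huv0))
    (by rwa [valuation_neg, ne_comm])
  have hdiff : v + -u = 2 * (a * x₁ ^ 3) := by ring
  have hax : a * x₁ ^ 3 ≠ 0 := by
    rintro h0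
    rw [h0, mul_zero, add_neg_eq_zero] at hdiff
    exact h (congrArg valuation hdiff).symm
  rw [valuation_neg, hdiff, valuation_mul two_ne_zero hax,
    valuation_mul (left_ne_zero_of_mul hax) (right_ne_zero_of_mul hax), valuation_pow,
    valuation_ofNat, padicValNat.eq_zero_of_not_dvd hp2] at hmin
  have hA₁ : A₁.valuation = 2 * a.valuation := by rw [← ha, valuation_pow]; norm_cast
  omega

/-- Let `p ≡ 1 (mod 3)` be a prime and `A₁, A₂, A₃ ∈ ℚ_p` nonzero with
`v_p(A₁) ≡ v_p(A₂) ≡ v_p(A₃) (mod 3)` and `A₂/A₃` not a cube in `ℚ_p`.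
If `a² = A₁`, then every solution of `w² = A₁x₁⁶ + A₂x₂⁶ + A₃x₃⁶` with
`w² ≠ A₁x₁⁶` satisfies `v_p(w − a·x₁³) ≡ v_p(w + a·x₁³) (mod 3)`. -/
theorem stmt_15 (p : ℕ) [Fact p.Prime] (hp3 : p % 3 = 1)
    (A₁ A₂ A₃ : ℚ_[p]) (h1 : A₁ ≠ 0) (h2 : A₂ ≠ 0) (h3 : A₃ ≠ 0)
    (hv12 : A₁.valuation % 3 = A₂.valuation % 3)
    (hv23 : A₂.valuation % 3 = A₃.valuation % 3)
    (hnc : ¬ ∃ y : ℚ_[p], y ^ 3 = A₂ / A₃)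
    (a : ℚ_[p]) (ha : a ^ 2 = A₁)
    (w x₁ x₂ x₃ : ℚ_[p])
    (heq : w ^ 2 = A₁ * x₁ ^ 6 + A₂ * x₂ ^ 6 + A₃ * x₃ ^ 6)
    (hne : w ^ 2 ≠ A₁ * x₁ ^ 6) :
    (w - a * x₁ ^ 3).valuation % 3 = (w + a * x₁ ^ 3).valuation % 3 :=
  stmt_15_general p hp3 A₁ A₂ A₃ h2 h3 hv12 hv23 hnc a ha w x₁ x₂ x₃ heq hne
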